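/- Let x₁,x₂,y,z ∈ Λ₀ with x₁ invertible and ξ₁⁺,ξ₂⁺,ξ₁⁻,ξ₂⁻ ∈ Λ₁ satisfy the special light cone relations ξ₁⁻ = −(y/x₁)ξ₂⁺, ξ₂⁻ = (y/x₁)ξ₁⁺, z = ξ₁⁺ξ₂⁺/(2x₁), together with x₁x₂ = y². Let θ₁,θ₂ ∈ Λ₁ be odd and h_B, h_C ∈ Λ₀ even invertible. Define x₂′ := x₁; z′ := z + (1/2)(h_B⁻¹θ₂ξ₁⁺ − h_Bθ₁ξ₂⁺ + θ₁θ₂x₁); y′ := −y + (1/2)(h_B⁻¹θ₂ξ₁⁺ + h_Bθ₁ξ₂⁺) + x₁; ξ₁⁻′ := c_θ h_C⁻¹(h_Bξ₂⁺ − θ₂x₁); ξ₂⁻′ := c_θ⁻¹ h_C(−h_B⁻¹ξ₁⁺ + θ₁x₁); and x₁′ := y′²/x₂′, ξ₁⁺′ := (y′/x₂′)ξ₂⁻′, ξ₂⁺′ := −(y′/x₂′)ξ₁⁻′. Then P^θ_{h_B,h_C} ∘ M(x₁,x₂,y,z|ξ₁⁺,ξ₂⁺,ξ₁⁻,ξ₂⁻)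 = M(x₁′,x₂′,y′,z′|ξ₁⁺′,ξ₂⁺′,ξ₁⁻′,ξ₂⁻′) ∘ P^θ_{h_B,h_C}. -/
import Mathlib


/- STATEMENT 7 (Lemma 4.9 of the paper): the action of the general prime transformation
P^θ_{h_B,h_C} on a point of the special light cone, as a conjugation identity
P ∘ M = M′ ∘ P for coordinate supermatrices. -/

noncomputable section

variable {V : Type*} [AddCommGroup V] [Module ℝ V]

/-- Membership in the even part Λ₀ of the Grassmann algebra. -/
def IsEven (x : ExteriorAlgebra ℝ V) : Prop :=
  x ∈ CliffordAlgebra.evenOdd (0 : QuadraticForm ℝ V) 0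

/-- Membership in the odd part Λ₁ of the Grassmann algebra. -/
def IsOdd (x : ExteriorAlgebra ℝ V) : Prop :=
  x ∈ CliffordAlgebra.evenOdd (0 : QuadraticForm ℝ V) 1

/-- The odd positions of a 3×3 supermatrix. -/
def oddPos (i j : Fin 3) : Bool := (i == 1) != (j == 1)

/-- The super matrix product. -/
def sMul {A : Type*} [Ring A] (M N : Matrix (Fin 3) (Fin 3) A) :
    Matrix (Fin 3) (Fin 3) A :=
  Matrix.of fun i j => ∑ k : Fin 3,
    if oddPos i k && oddPos k j then -(M i k * N k j) else M i k * N k j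

/-- The coordinate supermatrix `M(x₁,x₂,y,z|ξ₁⁺,ξ₂⁺,ξ₁⁻,ξ₂⁻)`. -/
def coordM {A : Type*} [Ring A] (x₁ x₂ y z ξ₁p ξ₂p ξ₁m ξ₂m : A) :
    Matrix (Fin 3) (Fin 3) A :=
  !![z - y, ξ₁p, x₁; ξ₁m, 2 * z, ξ₂p; -x₂, ξ₂m, z + y]

/-- `Z_a = diag(a, a², a)`. -/
def Zmat {A : Type*} [Ring A] (a : A) : Matrix (Fin 3) (Fin 3) A :=
  !![a, 0, 0; 0, a * a, 0; 0, 0, a]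

/-- The prime transformation `P′`. -/
def Pprime (θ₁ θ₂ : ExteriorAlgebra ℝ V) :
    Matrix (Fin 3) (Fin 3) (ExteriorAlgebra ℝ V) :=
  !![(1/2 : ℝ) • (θ₁ * θ₂) - 1, θ₁, 1; -θ₂, 1, 0; -1, 0, 0]

/-- The general prime transformation `P^θ_{h,k} = Z_{c_θ}∘Z_{k}⁻¹∘P′∘Z_{h}`, expressed
via an inverse `kinv` of `k`, with `c_θ := 1 + θ₁θ₂/6`. -/
def Pgen (θ₁ θ₂ h kinv : ExteriorAlgebra ℝ V) :
    Matrix (Fin 3) (Fin 3) (ExteriorAlgebra ℝ V) :=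
  sMul (sMul (sMul (Zmat (1 + (1/6 : ℝ) • (θ₁ * θ₂))) (Zmat kinv))
    (Pprime θ₁ θ₂)) (Zmat h)



theorem iswap (u v : V) :
    ExteriorAlgebra.ι ℝ u * ExteriorAlgebra.ι ℝ v = -(ExteriorAlgebra.ι ℝ v * ExteriorAlgebra.ι ℝ u) := by
  rw [eq_neg_iff_add_eq_zero]; exact ExteriorAlgebra.ι_add_mul_swap u v

theorem pair_central (m₁ m₂ : V) (b : ExteriorAlgebra ℝ V) :
    (ExteriorAlgebra.ι ℝ m₁ * ExteriorAlgebra.ι ℝ m₂) * b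
      = b * (ExteriorAlgebra.ι ℝ m₁ * ExteriorAlgebra.ι ℝ m₂) := by
  induction b using CliffordAlgebra.induction with
  | algebraMap r => rw [Algebra.commutes]
  | ι v =>
      show _ = ExteriorAlgebra.ι ℝ v * _
      rw [mul_assoc, iswap m₂ v, mul_neg, ← mul_assoc, iswap m₁ v, neg_mul, neg_neg, mul_assoc]
  | mul x y hx hy => rw [← mul_assoc, hx, mul_assoc, hy, ← mul_assoc]
  | add x y hx hy => rw [mul_add, hx, hy, add_mul]

theorem odd_iota_anticomm (v : V) {b : ExteriorAlgebra ℝ V} (hb : IsOdd b) :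
    ExteriorAlgebra.ι ℝ v * b = -(b * ExteriorAlgebra.ι ℝ v) := by
  induction b, hb using CliffordAlgebra.odd_induction with
  | ι u => exact iswap v u
  | add x y hx hy ihx ihy => rw [mul_add, ihx, ihy, add_mul, neg_add]
  | ι_mul_ι_mul m₁ m₂ x hx ih =>
      show ExteriorAlgebra.ι ℝ v * (ExteriorAlgebra.ι ℝ m₁ * ExteriorAlgebra.ι ℝ m₂ * x) = _
      rw [← mul_assoc, ← pair_central m₁ m₂ (ExteriorAlgebra.ι ℝ v), mul_assoc, ih, mul_neg,
        ← mul_assoc, mul_assoc _ x]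

theorem odd_anticomm {a b : ExteriorAlgebra ℝ V} (ha : IsOdd a) (hb : IsOdd b) :
    a * b = -(b * a) := by
  induction a, ha using CliffordAlgebra.odd_induction with
  | ι u => exact odd_iota_anticomm u hb
  | add x y hx hy ihx ihy => rw [add_mul, ihx, ihy, mul_add, neg_add]
  | ι_mul_ι_mul m₁ m₂ x hx ih =>
      show ExteriorAlgebra.ι ℝ m₁ * ExteriorAlgebra.ι ℝ m₂ * x * b = _
      rw [mul_assoc, ih, mul_neg, ← mul_assoc, pair_central m₁ m₂ b, mul_assoc, ← mul_assoc]


theorem even_comm {a : ExteriorAlgebra ℝ V} (ha : IsEven a) (b : ExteriorAlgebra ℝ V) :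
    a * b = b * a := by
  induction a, ha using CliffordAlgebra.even_induction with
  | algebraMap r => rw [Algebra.commutes]
  | add x y hx hy ihx ihy => rw [add_mul, ihx, ihy, mul_add]
  | ι_mul_ι_mul m₁ m₂ x hx ih =>
      show CliffordAlgebra.ι _ m₁ * CliffordAlgebra.ι _ m₂ * x * b = _
      rw [mul_assoc, ih, ← mul_assoc, pair_central m₁ m₂, mul_assoc]

theorem odd_sq {a : ExteriorAlgebra ℝ V} (ha : IsOdd a) : a * a = 0 := by
  have h := odd_anticomm ha ha
  have h2 : (2 : ℝ) • (a * a) = 0 := by rw [two_smul]; nth_rewrite 1 [h]; exact neg_add_cancel _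
  simpa using (smul_eq_zero.mp h2).resolve_left (by norm_num)

theorem inv_comm {A : Type*} [Monoid A] {a b c : A} (h1 : a * b = 1) (h2 : b * a = 1)
    (h : a * c = c * a) : b * c = c * b := by
  calc b * c = b * c * (a * b) := by rw [h1, mul_one]
    _ = b * (c * a) * b := by rw [← mul_assoc, mul_assoc b c a]
    _ = b * (a * c) * b := by rw [h]
    _ = (b * a) * (c * b) := by rw [← mul_assoc b a c, mul_assoc (b*a) c b, ← mul_assoc]
    _ = c * b := by rw [h2, one_mul]

theorem mulLC {A : Type*} [Ring A] {a b : A} (h : a * b = b * a) (c : A) :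
    b * (a * c) = a * (b * c) := by rw [← mul_assoc, ← h, mul_assoc]

theorem antiR {A : Type*} [Ring A] {a b : A} (h : b * a = -(a * b)) (c : A) :
    b * (a * c) = -(a * (b * c)) := by rw [← mul_assoc, h, neg_mul, mul_assoc]

theorem sqR {A : Type*} [Ring A] {a : A} (h : a * a = 0) (c : A) : a * (a * c) = 0 := by
  rw [← mul_assoc, h, zero_mul]

theorem invR {A : Type*} [Monoid A] {a b : A} (h : a * b = 1) (c : A) : a * (b * c) = c := by
  rw [← mul_assoc, h, one_mul]


set_option maxHeartbeats 4000000 in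
theorem stmt7
    (x₁ x₂ y z x₁i ξ₁p ξ₂p ξ₁m ξ₂m : ExteriorAlgebra ℝ V)
    (hx₁ : IsEven x₁) (hx₂ : IsEven x₂) (hy : IsEven y) (hz : IsEven z)
    (hx₁i : IsEven x₁i)
    (hξ₁p : IsOdd ξ₁p) (hξ₂p : IsOdd ξ₂p) (hξ₁m : IsOdd ξ₁m) (hξ₂m : IsOdd ξ₂m)
    (hinv : x₁ * x₁i = 1) (hinv' : x₁i * x₁ = 1)
    -- special light cone relations (x₁-branch) and x₁x₂ = y²
    (hr1 : ξ₁m = -(y * x₁i * ξ₂p)) (hr2 : ξ₂m = y * x₁i * ξ₁p)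
    (hr3 : z = (1/2 : ℝ) • (x₁i * (ξ₁p * ξ₂p)))
    (hy2 : x₁ * x₂ = y ^ 2)
    -- odd parameters and invertible ratios
    (θ₁ θ₂ : ExteriorAlgebra ℝ V) (hθ₁ : IsOdd θ₁) (hθ₂ : IsOdd θ₂)
    (hB hC hBi hCi : ExteriorAlgebra ℝ V)
    (hhB : IsEven hB) (hhC : IsEven hC)
    (hB1 : hB * hBi = 1) (hB2 : hBi * hB = 1)
    (hC1 : hC * hCi = 1) (hC2 : hCi * hC = 1)
    -- c_θ and its inverse
    (cθ cθi : ExteriorAlgebra ℝ V) (hcθ : cθ = 1 + (1/6 : ℝ) • (θ₁ * θ₂))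
    (hcθ1 : cθ * cθi = 1) (hcθ2 : cθi * cθ = 1)
    -- the transformed coordinates
    (x₁' x₂' y' z' ξ₁p' ξ₂p' ξ₁m' ξ₂m' : ExteriorAlgebra ℝ V)
    (hx₂' : x₂' = x₁)
    (hz' : z' = z + (1/2 : ℝ) • (hBi * (θ₂ * ξ₁p) - hB * (θ₁ * ξ₂p) + θ₁ * θ₂ * x₁))
    (hy' : y' = -y + (1/2 : ℝ) • (hBi * (θ₂ * ξ₁p) + hB * (θ₁ * ξ₂p)) + x₁)
    (hξ₁m' : ξ₁m' = cθ * hCi * (hB * ξ₂p - θ₂ * x₁))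
    (hξ₂m' : ξ₂m' = cθi * hC * (-(hBi * ξ₁p) + θ₁ * x₁))
    (hx₁' : x₁' = y' * y' * x₁i)
    (hξ₁p' : ξ₁p' = y' * x₁i * ξ₂m')
    (hξ₂p' : ξ₂p' = -(y' * x₁i * ξ₁m')) :
    sMul (Pgen θ₁ θ₂ hB hCi) (coordM x₁ x₂ y z ξ₁p ξ₂p ξ₁m ξ₂m) =
      sMul (coordM x₁' x₂' y' z' ξ₁p' ξ₂p' ξ₁m' ξ₂m') (Pgen θ₁ θ₂ hB hCi) := by

  subst hr1 hr2 hr3 hz' hy' hξ₁m' hξ₂m' hx₁' hξ₁p' hξ₂p' hcθ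
  have hθ11 : θ₁ * θ₁ = 0 := odd_sq hθ₁
  have hθ21 : θ₂ * θ₁ = -(θ₁ * θ₂) := odd_anticomm hθ₂ hθ₁
  have h4 : (θ₁ * θ₂) * (θ₁ * θ₂) = 0 := by
    have h4a : θ₂ * (θ₁ * θ₂) = -(θ₁ * (θ₂ * θ₂)) := antiR (odd_anticomm hθ₂ hθ₁) θ₂
    rw [mul_assoc, h4a, odd_sq hθ₂, mul_zero, neg_zero, mul_zero]
  have h5 : ((1/6 : ℝ) • (θ₁ * θ₂)) * ((1/6 : ℝ) • (θ₁ * θ₂)) = 0 := by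
    rw [smul_mul_assoc, mul_smul_comm, h4, smul_zero, smul_zero]
  have key : (1 + (1/6 : ℝ) • (θ₁ * θ₂)) * (1 - (1/6 : ℝ) • (θ₁ * θ₂)) = 1 := by
    simp only [add_mul, mul_sub, one_mul, mul_one, h5, sub_zero]
    abel
  have hcti : cθi = 1 - (1/6 : ℝ) • (θ₁ * θ₂) := by
    calc cθi = cθi * ((1 + (1/6 : ℝ) • (θ₁ * θ₂)) * (1 - (1/6 : ℝ) • (θ₁ * θ₂))) := by
          rw [key, mul_one]
      _ = (cθi * (1 + (1/6 : ℝ) • (θ₁ * θ₂))) * (1 - (1/6 : ℝ) • (θ₁ * θ₂)) := by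
          rw [mul_assoc]
      _ = 1 * (1 - (1/6 : ℝ) • (θ₁ * θ₂)) := by rw [hcθ2]
      _ = 1 - (1/6 : ℝ) • (θ₁ * θ₂) := one_mul _
  subst hcti
  have hx2 : x₂ = x₁i * (y * y) := by
    calc x₂ = (x₁i * x₁) * x₂ := by rw [hinv', one_mul]
      _ = x₁i * (x₁ * x₂) := mul_assoc _ _ _
      _ = x₁i * (y * y) := by rw [hy2, pow_two]
  subst hx2
  have cx1 : ∀ b, x₁ * b = b * x₁ := even_comm hx₁
  have cx1i : ∀ b, x₁i * b = b * x₁i := even_comm hx₁i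
  have cy : ∀ b, y * b = b * y := even_comm hy
  have chB : ∀ b, hB * b = b * hB := even_comm hhB
  have chBi : ∀ b, hBi * b = b * hBi := fun b => inv_comm hB1 hB2 (chB b)
  have chC : ∀ b, hC * b = b * hC := even_comm hhC
  have chCi : ∀ b, hCi * b = b * hCi := fun b => inv_comm hC1 hC2 (chC b)
  have R0 : x₁i * x₁ = x₁ * x₁i := (cx1 x₁i).symm
  have R1 : ∀ c, x₁i * (x₁ * c) = x₁ * (x₁i * c) := mulLC (cx1 x₁i)
  have R2 : y * x₁ = x₁ * y := (cx1 y).symm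
  have R3 : ∀ c, y * (x₁ * c) = x₁ * (y * c) := mulLC (cx1 y)
  have R4 : hB * x₁ = x₁ * hB := (cx1 hB).symm
  have R5 : ∀ c, hB * (x₁ * c) = x₁ * (hB * c) := mulLC (cx1 hB)
  have R6 : hBi * x₁ = x₁ * hBi := (cx1 hBi).symm
  have R7 : ∀ c, hBi * (x₁ * c) = x₁ * (hBi * c) := mulLC (cx1 hBi)
  have R8 : hC * x₁ = x₁ * hC := (cx1 hC).symm
  have R9 : ∀ c, hC * (x₁ * c) = x₁ * (hC * c) := mulLC (cx1 hC)
  have R10 : hCi * x₁ = x₁ * hCi := (cx1 hCi).symm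
  have R11 : ∀ c, hCi * (x₁ * c) = x₁ * (hCi * c) := mulLC (cx1 hCi)
  have R12 : y * x₁i = x₁i * y := (cx1i y).symm
  have R13 : ∀ c, y * (x₁i * c) = x₁i * (y * c) := mulLC (cx1i y)
  have R14 : hB * x₁i = x₁i * hB := (cx1i hB).symm
  have R15 : ∀ c, hB * (x₁i * c) = x₁i * (hB * c) := mulLC (cx1i hB)
  have R16 : hBi * x₁i = x₁i * hBi := (cx1i hBi).symm
  have R17 : ∀ c, hBi * (x₁i * c) = x₁i * (hBi * c) := mulLC (cx1i hBi)
  have R18 : hC * x₁i = x₁i * hC := (cx1i hC).symm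
  have R19 : ∀ c, hC * (x₁i * c) = x₁i * (hC * c) := mulLC (cx1i hC)
  have R20 : hCi * x₁i = x₁i * hCi := (cx1i hCi).symm
  have R21 : ∀ c, hCi * (x₁i * c) = x₁i * (hCi * c) := mulLC (cx1i hCi)
  have R22 : hB * y = y * hB := (cy hB).symm
  have R23 : ∀ c, hB * (y * c) = y * (hB * c) := mulLC (cy hB)
  have R24 : hBi * y = y * hBi := (cy hBi).symm
  have R25 : ∀ c, hBi * (y * c) = y * (hBi * c) := mulLC (cy hBi)
  have R26 : hC * y = y * hC := (cy hC).symm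
  have R27 : ∀ c, hC * (y * c) = y * (hC * c) := mulLC (cy hC)
  have R28 : hCi * y = y * hCi := (cy hCi).symm
  have R29 : ∀ c, hCi * (y * c) = y * (hCi * c) := mulLC (cy hCi)
  have R30 : hBi * hB = hB * hBi := (chB hBi).symm
  have R31 : ∀ c, hBi * (hB * c) = hB * (hBi * c) := mulLC (chB hBi)
  have R32 : hC * hB = hB * hC := (chB hC).symm
  have R33 : ∀ c, hC * (hB * c) = hB * (hC * c) := mulLC (chB hC)
  have R34 : hCi * hB = hB * hCi := (chB hCi).symm
  have R35 : ∀ c, hCi * (hB * c) = hB * (hCi * c) := mulLC (chB hCi)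
  have R36 : hC * hBi = hBi * hC := (chBi hC).symm
  have R37 : ∀ c, hC * (hBi * c) = hBi * (hC * c) := mulLC (chBi hC)
  have R38 : hCi * hBi = hBi * hCi := (chBi hCi).symm
  have R39 : ∀ c, hCi * (hBi * c) = hBi * (hCi * c) := mulLC (chBi hCi)
  have R40 : hCi * hC = hC * hCi := (chC hCi).symm
  have R41 : ∀ c, hCi * (hC * c) = hC * (hCi * c) := mulLC (chC hCi)
  have R42 : θ₁ * x₁ = x₁ * θ₁ := (cx1 θ₁).symm
  have R43 : ∀ c, θ₁ * (x₁ * c) = x₁ * (θ₁ * c) := mulLC (cx1 θ₁)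
  have R44 : θ₂ * x₁ = x₁ * θ₂ := (cx1 θ₂).symm
  have R45 : ∀ c, θ₂ * (x₁ * c) = x₁ * (θ₂ * c) := mulLC (cx1 θ₂)
  have R46 : ξ₁p * x₁ = x₁ * ξ₁p := (cx1 ξ₁p).symm
  have R47 : ∀ c, ξ₁p * (x₁ * c) = x₁ * (ξ₁p * c) := mulLC (cx1 ξ₁p)
  have R48 : ξ₂p * x₁ = x₁ * ξ₂p := (cx1 ξ₂p).symm
  have R49 : ∀ c, ξ₂p * (x₁ * c) = x₁ * (ξ₂p * c) := mulLC (cx1 ξ₂p)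
  have R50 : θ₁ * x₁i = x₁i * θ₁ := (cx1i θ₁).symm
  have R51 : ∀ c, θ₁ * (x₁i * c) = x₁i * (θ₁ * c) := mulLC (cx1i θ₁)
  have R52 : θ₂ * x₁i = x₁i * θ₂ := (cx1i θ₂).symm
  have R53 : ∀ c, θ₂ * (x₁i * c) = x₁i * (θ₂ * c) := mulLC (cx1i θ₂)
  have R54 : ξ₁p * x₁i = x₁i * ξ₁p := (cx1i ξ₁p).symm
  have R55 : ∀ c, ξ₁p * (x₁i * c) = x₁i * (ξ₁p * c) := mulLC (cx1i ξ₁p)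
  have R56 : ξ₂p * x₁i = x₁i * ξ₂p := (cx1i ξ₂p).symm
  have R57 : ∀ c, ξ₂p * (x₁i * c) = x₁i * (ξ₂p * c) := mulLC (cx1i ξ₂p)
  have R58 : θ₁ * y = y * θ₁ := (cy θ₁).symm
  have R59 : ∀ c, θ₁ * (y * c) = y * (θ₁ * c) := mulLC (cy θ₁)
  have R60 : θ₂ * y = y * θ₂ := (cy θ₂).symm
  have R61 : ∀ c, θ₂ * (y * c) = y * (θ₂ * c) := mulLC (cy θ₂)
  have R62 : ξ₁p * y = y * ξ₁p := (cy ξ₁p).symm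
  have R63 : ∀ c, ξ₁p * (y * c) = y * (ξ₁p * c) := mulLC (cy ξ₁p)
  have R64 : ξ₂p * y = y * ξ₂p := (cy ξ₂p).symm
  have R65 : ∀ c, ξ₂p * (y * c) = y * (ξ₂p * c) := mulLC (cy ξ₂p)
  have R66 : θ₁ * hB = hB * θ₁ := (chB θ₁).symm
  have R67 : ∀ c, θ₁ * (hB * c) = hB * (θ₁ * c) := mulLC (chB θ₁)
  have R68 : θ₂ * hB = hB * θ₂ := (chB θ₂).symm
  have R69 : ∀ c, θ₂ * (hB * c) = hB * (θ₂ * c) := mulLC (chB θ₂)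
  have R70 : ξ₁p * hB = hB * ξ₁p := (chB ξ₁p).symm
  have R71 : ∀ c, ξ₁p * (hB * c) = hB * (ξ₁p * c) := mulLC (chB ξ₁p)
  have R72 : ξ₂p * hB = hB * ξ₂p := (chB ξ₂p).symm
  have R73 : ∀ c, ξ₂p * (hB * c) = hB * (ξ₂p * c) := mulLC (chB ξ₂p)
  have R74 : θ₁ * hBi = hBi * θ₁ := (chBi θ₁).symm
  have R75 : ∀ c, θ₁ * (hBi * c) = hBi * (θ₁ * c) := mulLC (chBi θ₁)
  have R76 : θ₂ * hBi = hBi * θ₂ := (chBi θ₂).symm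
  have R77 : ∀ c, θ₂ * (hBi * c) = hBi * (θ₂ * c) := mulLC (chBi θ₂)
  have R78 : ξ₁p * hBi = hBi * ξ₁p := (chBi ξ₁p).symm
  have R79 : ∀ c, ξ₁p * (hBi * c) = hBi * (ξ₁p * c) := mulLC (chBi ξ₁p)
  have R80 : ξ₂p * hBi = hBi * ξ₂p := (chBi ξ₂p).symm
  have R81 : ∀ c, ξ₂p * (hBi * c) = hBi * (ξ₂p * c) := mulLC (chBi ξ₂p)
  have R82 : θ₁ * hC = hC * θ₁ := (chC θ₁).symm
  have R83 : ∀ c, θ₁ * (hC * c) = hC * (θ₁ * c) := mulLC (chC θ₁)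
  have R84 : θ₂ * hC = hC * θ₂ := (chC θ₂).symm
  have R85 : ∀ c, θ₂ * (hC * c) = hC * (θ₂ * c) := mulLC (chC θ₂)
  have R86 : ξ₁p * hC = hC * ξ₁p := (chC ξ₁p).symm
  have R87 : ∀ c, ξ₁p * (hC * c) = hC * (ξ₁p * c) := mulLC (chC ξ₁p)
  have R88 : ξ₂p * hC = hC * ξ₂p := (chC ξ₂p).symm
  have R89 : ∀ c, ξ₂p * (hC * c) = hC * (ξ₂p * c) := mulLC (chC ξ₂p)
  have R90 : θ₁ * hCi = hCi * θ₁ := (chCi θ₁).symm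
  have R91 : ∀ c, θ₁ * (hCi * c) = hCi * (θ₁ * c) := mulLC (chCi θ₁)
  have R92 : θ₂ * hCi = hCi * θ₂ := (chCi θ₂).symm
  have R93 : ∀ c, θ₂ * (hCi * c) = hCi * (θ₂ * c) := mulLC (chCi θ₂)
  have R94 : ξ₁p * hCi = hCi * ξ₁p := (chCi ξ₁p).symm
  have R95 : ∀ c, ξ₁p * (hCi * c) = hCi * (ξ₁p * c) := mulLC (chCi ξ₁p)
  have R96 : ξ₂p * hCi = hCi * ξ₂p := (chCi ξ₂p).symm
  have R97 : ∀ c, ξ₂p * (hCi * c) = hCi * (ξ₂p * c) := mulLC (chCi ξ₂p)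
  have R98 : θ₂ * θ₁ = -(θ₁ * θ₂) := odd_anticomm hθ₂ hθ₁
  have R99 : ∀ c, θ₂ * (θ₁ * c) = -(θ₁ * (θ₂ * c)) := antiR (odd_anticomm hθ₂ hθ₁)
  have R100 : ξ₁p * θ₁ = -(θ₁ * ξ₁p) := odd_anticomm hξ₁p hθ₁
  have R101 : ∀ c, ξ₁p * (θ₁ * c) = -(θ₁ * (ξ₁p * c)) := antiR (odd_anticomm hξ₁p hθ₁)
  have R102 : ξ₂p * θ₁ = -(θ₁ * ξ₂p) := odd_anticomm hξ₂p hθ₁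
  have R103 : ∀ c, ξ₂p * (θ₁ * c) = -(θ₁ * (ξ₂p * c)) := antiR (odd_anticomm hξ₂p hθ₁)
  have R104 : θ₁ * θ₁ = 0 := odd_sq hθ₁
  have R105 : ∀ c, θ₁ * (θ₁ * c) = 0 := sqR (odd_sq hθ₁)
  have R106 : ξ₁p * θ₂ = -(θ₂ * ξ₁p) := odd_anticomm hξ₁p hθ₂
  have R107 : ∀ c, ξ₁p * (θ₂ * c) = -(θ₂ * (ξ₁p * c)) := antiR (odd_anticomm hξ₁p hθ₂)
  have R108 : ξ₂p * θ₂ = -(θ₂ * ξ₂p) := odd_anticomm hξ₂p hθ₂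
  have R109 : ∀ c, ξ₂p * (θ₂ * c) = -(θ₂ * (ξ₂p * c)) := antiR (odd_anticomm hξ₂p hθ₂)
  have R110 : θ₂ * θ₂ = 0 := odd_sq hθ₂
  have R111 : ∀ c, θ₂ * (θ₂ * c) = 0 := sqR (odd_sq hθ₂)
  have R112 : ξ₂p * ξ₁p = -(ξ₁p * ξ₂p) := odd_anticomm hξ₂p hξ₁p
  have R113 : ∀ c, ξ₂p * (ξ₁p * c) = -(ξ₁p * (ξ₂p * c)) := antiR (odd_anticomm hξ₂p hξ₁p)
  have R114 : ξ₁p * ξ₁p = 0 := odd_sq hξ₁p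
  have R115 : ∀ c, ξ₁p * (ξ₁p * c) = 0 := sqR (odd_sq hξ₁p)
  have R116 : ξ₂p * ξ₂p = 0 := odd_sq hξ₂p
  have R117 : ∀ c, ξ₂p * (ξ₂p * c) = 0 := sqR (odd_sq hξ₂p)
  have R118 : x₁ * x₁i = 1 := hinv
  have R119 : x₁i * x₁ = 1 := hinv'
  have R120 : ∀ c, x₁ * (x₁i * c) = c := invR hinv
  have R121 : ∀ c, x₁i * (x₁ * c) = c := invR hinv'
  have R122 : hB * hBi = 1 := hB1
  have R123 : hBi * hB = 1 := hB2
  have R124 : ∀ c, hB * (hBi * c) = c := invR hB1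
  have R125 : ∀ c, hBi * (hB * c) = c := invR hB2
  have R126 : hC * hCi = 1 := hC1
  have R127 : hCi * hC = 1 := hC2
  have R128 : ∀ c, hC * (hCi * c) = c := invR hC1
  have R129 : ∀ c, hCi * (hC * c) = c := invR hC2

  ext i j
  fin_cases i <;> fin_cases j <;>
  · simp [hx₂', Pgen, sMul, coordM, Zmat, Pprime, oddPos, Fin.sum_univ_three,
      Matrix.vecHead, Matrix.vecTail]
    simp only [mul_add, add_mul, mul_sub, sub_mul, mul_neg, neg_mul, mul_one, one_mul, mul_zero,
      zero_mul, neg_neg, smul_add, smul_sub, smul_neg, mul_smul_comm, smul_mul_assoc, smul_smul,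
      two_mul, add_zero, zero_add, sub_zero, zero_sub, neg_zero, mul_assoc,
      R0, R1, R2, R3, R4, R5, R6, R7, R8, R9, R10, R11, R12, R13, R14, R15, R16, R17, R18, R19, R20, R21, R22, R23, R24, R25, R26, R27, R28, R29, R30, R31, R32, R33, R34, R35, R36, R37, R38, R39, R40, R41, R42, R43, R44, R45, R46, R47, R48, R49, R50, R51, R52, R53, R54, R55, R56, R57, R58, R59, R60, R61, R62, R63, R64, R65, R66, R67, R68, R69, R70, R71, R72, R73, R74, R75, R76, R77, R78, R79, R80, R81, R82, R83, R84, R85, R86, R87, R88, R89, R90, R91, R92, R93, R94, R95, R96, R97, R98, R99, R100, R101, R102, R103, R104, R105, R106, R107, R108, R109, R110, R111, R112, R113, R114, R115, R116, R117, R118, R119, R120, R121, R122, R123, R124, R125, R126, R127, R128, R129]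
    try module
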